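/- Let M and N be closed convex subsets of ℝ̂ with M ≅ N. Then there exists a matrix Z ∈ M₂(ℝ̄) such that PC(Z) = M and PR(Z) = N. -/

import Mathlib

open scoped Classical ENNReal

/-- The tropical semiring `ℝ̄ = ℝ ∪ {-∞}`, carried by `WithBot ℝ`;
tropical addition is `max` and tropical multiplication is `+`. -/
abbrev Rb : Type := WithBot ℝ

/-- Tropical matrix multiplication. -/
noncomputable def tMul {n : ℕ} (A B : Fin n → Fin n → Rb) : Fin n → Fin n → Rb :=
  fun i j => Finset.univ.sup fun k => A i k + B k j

/-- The column space of a matrix: all tropical linear combinations of its columns. -/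
def ColSpace {n : ℕ} (A : Fin n → Fin n → Rb) : Set (Fin n → Rb) :=
  {v | ∃ c : Fin n → Rb, ∀ i, v i = Finset.univ.sup fun j => c j + A i j}

/-- The row space of a matrix: all tropical linear combinations of its rows. -/
def RowSpace {n : ℕ} (A : Fin n → Fin n → Rb) : Set (Fin n → Rb) :=
  {v | ∃ c : Fin n → Rb, ∀ j, v j = Finset.univ.sup fun i => c i + A i j}

abbrev Mat2 : Type := Fin 2 → Fin 2 → Rb

/-- Inclusion of `ℝ̄` into the projective line `ℝ̂ = ℝ ∪ {-∞, +∞}` (modelled by `EReal`). -/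
noncomputable def toE : Rb → EReal := WithBot.recBotCoe ⊥ (fun r : ℝ => (r : EReal))

/-- Projection of a vector `(a, b)` to `b - a ∈ ℝ̂`. -/
noncomputable def projPt (v : Fin 2 → Rb) : EReal := toE (v 1) - toE (v 0)

def zeroVec : Fin 2 → Rb := fun _ => ⊥

/-- Projective column space. -/
noncomputable def PC (A : Mat2) : Set EReal :=
  {z | ∃ v ∈ ColSpace A, v ≠ zeroVec ∧ projPt v = z}

/-- Projective row space. -/
noncomputable def PR (A : Mat2) : Set EReal :=
  {z | ∃ v ∈ RowSpace A, v ≠ zeroVec ∧ projPt v = z}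

/-- The metric `δ` on `ℝ̂`. -/
noncomputable def delta (x y : EReal) : ℝ≥0∞ :=
  if (∃ a : ℝ, x = (a : EReal)) ∧ (∃ b : ℝ, y = (b : EReal)) then
    ENNReal.ofReal |x.toReal - y.toReal|
  else if x = y then 0 else ⊤

/-- `M` embeds isometrically into `N`. -/
def IsomEmbed (M N : Set EReal) : Prop :=
  ∃ f : EReal → EReal, Set.MapsTo f M N ∧ Set.InjOn f M ∧
    ∀ x ∈ M, ∀ y ∈ M, delta (f x) (f y) = delta x y

/-- `M` and `N` are isometric. -/
def Isom (M N : Set EReal) : Prop :=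
  ∃ f : EReal → EReal, Set.BijOn f M N ∧
    ∀ x ∈ M, ∀ y ∈ M, delta (f x) (f y) = delta x y

/-- Closed convex subsets of `ℝ̂`: the empty set, singletons and closed intervals. -/
def IsClosedConvex (S : Set EReal) : Prop :=
  S = ∅ ∨ ∃ x y : EReal, x ≤ y ∧ S = Set.Icc x y

/-!
If the two columns `u, w` of a matrix are nonzero, its projective column space is the interval
between their projections: each set `{v | v 1 ≤ v 0 + z}` is a tropical half-plane, so
projections of tropical combinations stay between `projPt u` and `projPt w`, and every real
point in between is reached by balancing the two columns. The same holds for rows, so a matrix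
`!![a, b; c, d]` realises the intervals spanned by `{c - a, d - b}` and by `{b - a, d - c}`.

An isometry between nondegenerate closed intervals of `ℝ̂` maps real points to real
points (δ is finite and nonzero between distinct reals) and hence matches up the endpoints at
infinity; for bounded intervals it preserves the length. So the two intervals are both bounded
of the same length, both half-lines, or both the whole line, and in each case an explicit matrix
does the job. Singletons are realised by tropical rank-one matrices.
-/

open Set Function

@[simp] lemma toE_bot : toE ⊥ = ⊥ := rfl

@[simp] lemma toE_coe (r : ℝ) : toE r = r := rfl

@[simp] lemma toE_zero : toE 0 = 0 := rfl

lemma ne_zeroVec_iff {v : Fin 2 → Rb} : v ≠ zeroVec ↔ v 0 ≠ ⊥ ∨ v 1 ≠ ⊥ := by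
  simp only [ne_eq, zeroVec, funext_iff, Fin.forall_fin_two, not_and_or]

lemma projPt_le_coe_iff (v : Fin 2 → Rb) (z : ℝ) : projPt v ≤ z ↔ v 1 ≤ v 0 + z := by
  unfold projPt
  cases v 0 using WithBot.recBotCoe <;> cases v 1 using WithBot.recBotCoe <;> simp
  rw [← EReal.coe_sub, EReal.coe_le_coe_iff, ← WithBot.coe_add, WithBot.coe_le_coe]
  constructor <;> intro <;> linarith

lemma coe_le_projPt_iff {v : Fin 2 → Rb} (hv : v ≠ zeroVec) (z : ℝ) :
    (z : EReal) ≤ projPt v ↔ v 0 + z ≤ v 1 := by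
  rw [ne_zeroVec_iff] at hv
  unfold projPt
  cases h0 : v 0 using WithBot.recBotCoe <;> cases h1 : v 1 using WithBot.recBotCoe <;> simp_all
  rw [← EReal.coe_sub, EReal.coe_le_coe_iff, ← WithBot.coe_add, WithBot.coe_le_coe]
  constructor <;> intro <;> linarith

lemma projPt_const_add {s : Rb} (hs : s ≠ ⊥) (v : Fin 2 → Rb) :
    projPt (fun i => s + v i) = projPt v := by
  lift s to ℝ using hs
  unfold projPt
  cases h0 : v 0 using WithBot.recBotCoe <;> cases h1 : v 1 using WithBot.recBotCoe <;>
    simp [h0, h1, ← WithBot.coe_add]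
  norm_cast
  ring_nf

def tropComb (c₀ c₁ : Rb) (u w : Fin 2 → Rb) : Fin 2 → Rb :=
  fun i => (c₀ + u i) ⊔ (c₁ + w i)

def projSpan (u w : Fin 2 → Rb) : Set EReal :=
  {z | ∃ c₀ c₁, tropComb c₀ c₁ u w ≠ zeroVec ∧ projPt (tropComb c₀ c₁ u w) = z}

section TropComb

variable {u w : Fin 2 → Rb}

lemma tropComb_comm (c₀ c₁ : Rb) (u w : Fin 2 → Rb) :
    tropComb c₀ c₁ u w = tropComb c₁ c₀ w u :=
  funext fun _ => sup_comm _ _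

lemma projSpan_comm (u w : Fin 2 → Rb) : projSpan u w = projSpan w u := by
  ext z
  constructor <;> rintro ⟨c₀, c₁, h⟩ <;> exact ⟨c₁, c₀, tropComb_comm c₀ c₁ _ _ ▸ h⟩

lemma projPt_tropComb_le (c₀ c₁ : Rb) (u w : Fin 2 → Rb) :
    projPt (tropComb c₀ c₁ u w) ≤ projPt u ⊔ projPt w := by
  refine EReal.le_of_forall_lt_iff_le.1 fun z hz => ?_
  have hu := (projPt_le_coe_iff u z).1 (le_sup_left.trans hz.le)
  have hw := (projPt_le_coe_iff w z).1 (le_sup_right.trans hz.le)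
  rw [projPt_le_coe_iff]
  calc (c₀ + u 1) ⊔ (c₁ + w 1) ≤ (c₀ + (u 0 + z)) ⊔ (c₁ + (w 0 + z)) := by gcongr
    _ = (c₀ + u 0) ⊔ (c₁ + w 0) + z := by simp only [← add_assoc, max_add_add_right]

lemma inf_le_projPt_tropComb (hu : u ≠ zeroVec) (hw : w ≠ zeroVec) {c₀ c₁ : Rb}
    (hv : tropComb c₀ c₁ u w ≠ zeroVec) : projPt u ⊓ projPt w ≤ projPt (tropComb c₀ c₁ u w) := by
  refine EReal.ge_of_forall_gt_iff_ge.1 fun z hz => ?_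
  have hu := (coe_le_projPt_iff hu z).1 (hz.le.trans inf_le_left)
  have hw := (coe_le_projPt_iff hw z).1 (hz.le.trans inf_le_right)
  rw [coe_le_projPt_iff hv]
  calc (c₀ + u 0) ⊔ (c₁ + w 0) + z = (c₀ + (u 0 + z)) ⊔ (c₁ + (w 0 + z)) := by
        simp only [← add_assoc, max_add_add_right]
    _ ≤ (c₀ + u 1) ⊔ (c₁ + w 1) := by gcongr

lemma coe_mem_projSpan (hu : u ≠ zeroVec) (hw : w ≠ zeroVec) {z : ℝ}
    (hzu : projPt u ≤ z) (hzw : z ≤ projPt w) : (z : EReal) ∈ projSpan u w := by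
  have hu' := (projPt_le_coe_iff u z).1 hzu
  have hw' := (coe_le_projPt_iff hw z).1 hzw
  obtain ⟨a, ha⟩ : ∃ a : ℝ, u 0 = a := by
    cases h : u 0 using WithBot.recBotCoe
    · simp_all [ne_zeroVec_iff]
    · exact ⟨_, rfl⟩
  obtain ⟨b, hb⟩ : ∃ b : ℝ, w 1 = b := by
    cases h : w 1 using WithBot.recBotCoe
    · simp_all [ne_zeroVec_iff]
    · exact ⟨_, rfl⟩
  -- The coefficients are chosen so that the `u`-summand is `0` in `v 0 + z` and the
  -- `w`-summand is `0` in `v 1`; the other two summands are at most `0`.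
  set v := tropComb ((-(a + z) : ℝ)) ((-b : ℝ)) u w
  have hv1 : v 1 = 0 := by
    have hle : ((-(a + z) : ℝ) : Rb) + u 1 ≤ 0 := calc
      _ ≤ ((-(a + z) : ℝ) : Rb) + (u 0 + z) := by gcongr
      _ = 0 := by rw [ha]; norm_cast; ring
    have heq : ((-b : ℝ) : Rb) + w 1 = 0 := by rw [hb]; norm_cast; ring
    simp only [v, tropComb, heq, sup_eq_right.2 hle]
  have hv0 : v 0 + z = 0 := by
    have hle : ((-b : ℝ) : Rb) + w 0 + z ≤ 0 := calc
      _ ≤ ((-b : ℝ) : Rb) + w 1 := by rw [add_assoc]; gcongr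
      _ = 0 := by rw [hb]; norm_cast; ring
    have heq : ((-(a + z) : ℝ) : Rb) + u 0 + z = 0 := by rw [ha]; norm_cast; ring
    simp only [v, tropComb, ← max_add_add_right, heq, sup_eq_left.2 hle]
  have hv : v ≠ zeroVec := ne_zeroVec_iff.2 (Or.inr (by simp [hv1]))
  refine ⟨_, _, hv, le_antisymm ?_ ?_⟩
  · exact (projPt_le_coe_iff v z).2 (hv1.trans hv0.symm).le
  · exact (coe_le_projPt_iff hv z).2 (hv0.trans hv1.symm).le

lemma projPt_mem_projSpan_left (hu : u ≠ zeroVec) (w : Fin 2 → Rb) : projPt u ∈ projSpan u w := by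
  have h : tropComb 0 ⊥ u w = u := funext fun i => by simp [tropComb]
  exact ⟨0, ⊥, by rwa [h], by rw [h]⟩

lemma mem_projSpan_of_le_of_le (hu : u ≠ zeroVec) (hw : w ≠ zeroVec) {z : EReal}
    (hzu : projPt u ≤ z) (hzw : z ≤ projPt w) : z ∈ projSpan u w := by
  rcases hzu.eq_or_lt with rfl | hzu
  · exact projPt_mem_projSpan_left hu w
  rcases hzw.eq_or_lt with rfl | hzw
  · exact projSpan_comm u w ▸ projPt_mem_projSpan_left hw u
  obtain ⟨r, rfl⟩ : ∃ r : ℝ, z = r := ⟨_, (EReal.coe_toReal hzw.ne_top hzu.ne_bot).symm⟩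
  exact coe_mem_projSpan hu hw hzu.le hzw.le

lemma projSpan_eq_uIcc (hu : u ≠ zeroVec) (hw : w ≠ zeroVec) :
    projSpan u w = uIcc (projPt u) (projPt w) := by
  ext z
  constructor
  · rintro ⟨c₀, c₁, hv, rfl⟩
    exact ⟨inf_le_projPt_tropComb hu hw hv, projPt_tropComb_le c₀ c₁ u w⟩
  · rw [mem_uIcc]
    rintro (⟨hzu, hzw⟩ | ⟨hzw, hzu⟩)
    · exact mem_projSpan_of_le_of_le hu hw hzu hzw
    · exact projSpan_comm u w ▸ mem_projSpan_of_le_of_le hw hu hzw hzu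

end TropComb

lemma mem_colSpace_iff {Z : Mat2} {v : Fin 2 → Rb} :
    v ∈ ColSpace Z ↔ ∃ c₀ c₁, v = tropComb c₀ c₁ (Z · 0) (Z · 1) := by
  simp [ColSpace, Fin.univ_succ, tropComb, funext_iff, Fin.exists_fin_succ_pi]

lemma PC_eq_projSpan (Z : Mat2) : PC Z = projSpan (Z · 0) (Z · 1) := by
  ext z
  simp [PC, projSpan, mem_colSpace_iff]

lemma PR_eq_PC_swap (Z : Mat2) : PR Z = PC (swap Z) := rfl

lemma PC_eq_uIcc {Z : Mat2} (h₀ : (Z · 0) ≠ zeroVec) (h₁ : (Z · 1) ≠ zeroVec) :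
    PC Z = uIcc (projPt (Z · 0)) (projPt (Z · 1)) := by
  rw [PC_eq_projSpan, projSpan_eq_uIcc h₀ h₁]

lemma PR_eq_uIcc {Z : Mat2} (h₀ : Z 0 ≠ zeroVec) (h₁ : Z 1 ≠ zeroVec) :
    PR Z = uIcc (projPt (Z 0)) (projPt (Z 1)) :=
  PC_eq_uIcc (Z := swap Z) h₀ h₁

lemma PC_of_entries {a b c d : Rb} (h₀ : a ≠ ⊥ ∨ c ≠ ⊥) (h₁ : b ≠ ⊥ ∨ d ≠ ⊥) :
    PC ![![a, b], ![c, d]] = uIcc (toE c - toE a) (toE d - toE b) :=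
  PC_eq_uIcc (ne_zeroVec_iff.2 h₀) (ne_zeroVec_iff.2 h₁)

lemma PR_of_entries {a b c d : Rb} (h₀ : a ≠ ⊥ ∨ b ≠ ⊥) (h₁ : c ≠ ⊥ ∨ d ≠ ⊥) :
    PR ![![a, b], ![c, d]] = uIcc (toE b - toE a) (toE d - toE c) :=
  PR_eq_uIcc (ne_zeroVec_iff.2 h₀) (ne_zeroVec_iff.2 h₁)

lemma PC_rankOne {u w : Fin 2 → Rb} (hu : u ≠ zeroVec) (hw : w ≠ zeroVec) :
    PC (fun i j => u i + w j) = {projPt u} := by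
  have hcomb : ∀ c₀ c₁, tropComb c₀ c₁ (fun i => u i + w 0) (fun i => u i + w 1) =
      fun i => (c₀ + w 0) ⊔ (c₁ + w 1) + u i := fun c₀ c₁ => funext fun i => by
    rw [tropComb, ← max_add_add_right]
    congr 1 <;> abel
  rw [PC_eq_projSpan]
  ext z
  constructor
  · rintro ⟨c₀, c₁, hv, rfl⟩
    rw [hcomb] at hv ⊢
    exact projPt_const_add (fun hbot => hv (by simp only [hbot, WithBot.bot_add]; rfl)) u
  · rintro rfl
    have hs : w 0 ⊔ w 1 ≠ ⊥ := by
      rw [ne_eq, sup_eq_bot_iff, not_and_or]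
      exact ne_zeroVec_iff.1 hw
    refine ⟨0, 0, ?_, ?_⟩ <;> simp only [hcomb, zero_add]
    · simpa [ne_zeroVec_iff, WithBot.add_eq_bot, hs] using hu
    · exact projPt_const_add hs u

lemma PR_rankOne {u w : Fin 2 → Rb} (hu : u ≠ zeroVec) (hw : w ≠ zeroVec) :
    PR (fun i j => u i + w j) = {projPt w} := by
  rw [PR_eq_PC_swap, ← PC_rankOne hw hu]
  exact congrArg PC (funext₂ fun _ _ => add_comm _ _)

lemma PC_bot : PC (fun _ _ => ⊥) = ∅ := by
  rw [PC_eq_projSpan, eq_empty_iff_forall_notMem]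
  rintro z ⟨c₀, c₁, hv, -⟩
  exact hv (funext fun i => by simp [tropComb, zeroVec])

lemma PR_bot : PR (fun _ _ => ⊥) = ∅ := PC_bot

lemma exists_projPt_eq (z : EReal) : ∃ v, v ≠ zeroVec ∧ projPt v = z := by
  induction z using EReal.rec with
  | bot => exact ⟨![0, ⊥], by simp [ne_zeroVec_iff], by simp [projPt]⟩
  | coe r => exact ⟨![0, (r : Rb)], by simp [ne_zeroVec_iff], by simp [projPt]⟩
  | top => exact ⟨![⊥, 0], by simp [ne_zeroVec_iff], by simp [projPt]⟩

lemma exists_PC_PR_singleton (p q : EReal) : ∃ Z, PC Z = {p} ∧ PR Z = {q} := by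
  obtain ⟨u, hu, rfl⟩ := exists_projPt_eq p
  obtain ⟨w, hw, rfl⟩ := exists_projPt_eq q
  exact ⟨fun i j => u i + w j, PC_rankOne hu hw, PR_rankOne hu hw⟩

lemma exists_PC_PR_Icc_coe {a b a' b' : ℝ} (hab : a ≤ b) (h : b - a = b' - a') :
    ∃ Z, PC Z = Icc (a : EReal) b ∧ PR Z = Icc (a' : EReal) b' := by
  refine ⟨![![0, (a' : Rb)], ![(a : Rb), ((a + b' : ℝ) : Rb)]], ?_, ?_⟩ <;>
    simp [PC_of_entries, PR_of_entries, -WithBot.coe_add, -EReal.coe_add, ← EReal.coe_sub]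
  · rw [show a + b' - a' = b by linarith, uIcc_of_le (mod_cast hab)]
  · exact uIcc_of_le (mod_cast (by linarith))

def IsHalfLine (S : Set EReal) : Prop :=
  (∃ b : ℝ, S = Iic (b : EReal)) ∨ ∃ a : ℝ, S = Ici (a : EReal)

lemma exists_PC_PR_of_isHalfLine {M N : Set EReal} (hM : IsHalfLine M) (hN : IsHalfLine N) :
    ∃ Z, PC Z = M ∧ PR Z = N := by
  rcases hM with ⟨b, rfl⟩ | ⟨a, rfl⟩ <;> rcases hN with ⟨b', rfl⟩ | ⟨a', rfl⟩
  · exact ⟨![![0, (b' : Rb)], ![(b : Rb), ⊥]], by simp [PC_of_entries],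
      by simp [PR_of_entries]⟩
  · refine ⟨![![0, (a' : Rb)], ![⊥, ((a' + b : ℝ) : Rb)]], ?_, ?_⟩ <;>
      simp [PC_of_entries, PR_of_entries, -WithBot.coe_add, -EReal.coe_add, ← EReal.coe_sub]
  · refine ⟨![![0, ⊥], ![(a : Rb), ((a + b' : ℝ) : Rb)]], ?_, ?_⟩ <;>
      simp [PC_of_entries, PR_of_entries, -WithBot.coe_add, -EReal.coe_add, ← EReal.coe_sub]
  · refine ⟨![![⊥, (a' : Rb)], ![(a : Rb), ((a + a' : ℝ) : Rb)]], ?_, ?_⟩ <;>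
      simp [PC_of_entries, PR_of_entries, -WithBot.coe_add, -EReal.coe_add, ← EReal.coe_sub]

lemma exists_PC_PR_univ : ∃ Z, PC Z = univ ∧ PR Z = univ :=
  ⟨![![0, ⊥], ![⊥, 0]], by simp [PC_of_entries], by simp [PR_of_entries]⟩

lemma Icc_eq_coe_or_isHalfLine_or_univ {x y : EReal} (h : x < y) :
    (∃ a b : ℝ, x = a ∧ y = b) ∨ IsHalfLine (Icc x y) ∨ Icc x y = univ := by
  induction x using EReal.rec <;> induction y using EReal.rec <;>
    simp_all [IsHalfLine, Iic_inj, Ici_inj]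

def infinities : Set EReal := {⊥, ⊤}

lemma coe_notMem_infinities (r : ℝ) : (r : EReal) ∉ infinities := by
  simp [infinities]

lemma ncard_Icc_coe_inter_infinities (a b : ℝ) : (Icc (a : EReal) b ∩ infinities).ncard = 0 := by
  convert ncard_empty EReal
  refine eq_empty_iff_forall_notMem.2 ?_
  rintro z ⟨hz, rfl | rfl⟩ <;> simp at hz

lemma IsHalfLine.ncard_inter_infinities {S : Set EReal} (h : IsHalfLine S) :
    (S ∩ infinities).ncard = 1 := by
  rw [ncard_eq_one]
  rcases h with ⟨b, rfl⟩ | ⟨a, rfl⟩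
  · exact ⟨⊥, by ext; simp [infinities]; aesop⟩
  · exact ⟨⊤, by ext; simp [infinities]; aesop⟩

lemma ncard_infinities : infinities.ncard = 2 := by
  simp [infinities]

lemma delta_eq_top_iff {x y : EReal} :
    delta x y = ⊤ ↔ x ≠ y ∧ (x ∈ infinities ∨ y ∈ infinities) := by
  induction x using EReal.rec <;> induction y using EReal.rec <;> simp [delta, infinities]

lemma delta_coe_coe (a b : ℝ) : delta a b = ENNReal.ofReal |a - b| := by
  simp [delta]

section Isometry

variable {M N : Set EReal}

lemma Isom.symm (h : Isom M N) : Isom N M := by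
  obtain ⟨f, hf, hδ⟩ := h
  have hinv := hf.invOn_invFunOn
  have hg := hf.symm hinv.symm
  refine ⟨invFunOn f M, hg, fun p hp q hq => ?_⟩
  rw [← hδ _ (hg.mapsTo hp) _ (hg.mapsTo hq), hinv.2 hp, hinv.2 hq]

lemma Isom.eq_empty (h : Isom M N) (hM : M = ∅) : N = ∅ := by
  obtain ⟨f, hf, -⟩ := h
  rw [← hf.image_eq, hM, image_empty]

lemma Isom.nontrivial (h : Isom M N) (hM : M.Nontrivial) : N.Nontrivial := by
  obtain ⟨f, hf, -⟩ := h
  exact hf.image_eq ▸ hM.image_of_injOn hf.injOn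

lemma Isom.exists_eq_singleton {p : EReal} (h : Isom {p} N) : ∃ q, N = {q} := by
  obtain ⟨f, hf, -⟩ := h
  exact ⟨f p, by rw [← hf.image_eq, image_singleton]⟩

lemma apply_notMem_infinities {f : EReal → EReal} (hinj : InjOn f M)
    (hδ : ∀ x ∈ M, ∀ y ∈ M, delta (f x) (f y) = delta x y)
    (hM : ∀ p : EReal, ∃ r : ℝ, (r : EReal) ∈ M ∧ p ≠ r) {p : EReal} (hp : p ∈ M)
    (hpi : p ∉ infinities) : f p ∉ infinities := by
  obtain ⟨r, hrM, hpr⟩ := hM p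
  have hfin : delta p r ≠ ⊤ := by
    rw [Ne, delta_eq_top_iff, not_and, not_or]
    exact fun _ => ⟨hpi, coe_notMem_infinities r⟩
  rw [← hδ p hp _ hrM, Ne, delta_eq_top_iff, not_and, not_or] at hfin
  exact (hfin (hinj.ne hp hrM hpr)).1

lemma apply_mem_infinities {f : EReal → EReal} (hinj : InjOn f M)
    (hδ : ∀ x ∈ M, ∀ y ∈ M, delta (f x) (f y) = delta x y)
    (hM : ∀ p : EReal, ∃ r : ℝ, (r : EReal) ∈ M ∧ p ≠ r) {p : EReal} (hp : p ∈ M)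
    (hpi : p ∈ infinities) : f p ∈ infinities := by
  obtain ⟨r, hrM, hpr⟩ := hM p
  have hinf : delta (f p) (f r) = ⊤ := by
    rw [hδ p hp _ hrM, delta_eq_top_iff]
    exact ⟨hpr, Or.inl hpi⟩
  rw [delta_eq_top_iff] at hinf
  exact hinf.2.resolve_right
    (apply_notMem_infinities hinj hδ hM hrM (coe_notMem_infinities r))

lemma Isom.ncard_inter_infinities (h : Isom M N)
    (hM : ∀ p : EReal, ∃ r : ℝ, (r : EReal) ∈ M ∧ p ≠ r) :
    (M ∩ infinities).ncard = (N ∩ infinities).ncard := by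
  obtain ⟨f, hf, hδ⟩ := h
  refine BijOn.ncard_eq ⟨fun p hp => ⟨hf.mapsTo hp.1, apply_mem_infinities hf.injOn hδ hM hp.1 hp.2⟩,
    hf.injOn.mono inter_subset_left, fun q hq => ?_⟩
  obtain ⟨p, hp, rfl⟩ := hf.surjOn hq.1
  exact ⟨p, ⟨hp, not_not.1 fun hpi => apply_notMem_infinities hf.injOn hδ hM hp hpi hq.2⟩, rfl⟩

lemma exists_coe_mem_Icc_ne {x y : EReal} (h : x < y) (p : EReal) :
    ∃ r : ℝ, (r : EReal) ∈ Icc x y ∧ p ≠ r := by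
  obtain ⟨r₁, hxr₁, hr₁y⟩ := EReal.exists_between_coe_real h
  obtain ⟨r₂, hr₁r₂, hr₂y⟩ := EReal.exists_between_coe_real hr₁y
  by_cases hp : p = r₁
  · exact ⟨r₂, ⟨(hxr₁.trans hr₁r₂).le, hr₂y.le⟩, hp ▸ hr₁r₂.ne⟩
  · exact ⟨r₁, ⟨hxr₁.le, hr₁y.le⟩, hp⟩

lemma Isom.sub_le_sub_of_Icc_coe {a b a' b' : ℝ}
    (h : Isom (Icc (a : EReal) b) (Icc (a' : EReal) b')) (hab : a ≤ b) : b - a ≤ b' - a' := by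
  obtain ⟨f, hf, hδ⟩ := h
  have ha : (a : EReal) ∈ Icc (a : EReal) b := ⟨le_rfl, mod_cast hab⟩
  have hb : (b : EReal) ∈ Icc (a : EReal) b := ⟨mod_cast hab, le_rfl⟩
  have hreal : ∀ q ∈ Icc (a' : EReal) b', ∃ s : ℝ, q = s ∧ a' ≤ s ∧ s ≤ b' := by
    rintro q ⟨hq₁, hq₂⟩
    induction q using EReal.rec <;> simp_all
  obtain ⟨s, hs, hs₁, hs₂⟩ := hreal _ (hf.mapsTo ha)
  obtain ⟨t, ht, ht₁, ht₂⟩ := hreal _ (hf.mapsTo hb)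
  have hst := hδ _ ha _ hb
  rw [hs, ht, delta_coe_coe, delta_coe_coe,
    ENNReal.ofReal_eq_ofReal_iff (abs_nonneg _) (abs_nonneg _), abs_sub_comm a,
    abs_of_nonneg (sub_nonneg.2 hab)] at hst
  have : |s - t| ≤ b' - a' := abs_sub_le_iff.2 ⟨by linarith, by linarith⟩
  linarith

end Isometry

lemma exists_PC_PR_of_isom_Icc {x y x' y' : EReal} (hxy : x < y) (hxy' : x' ≤ y')
    (h : Isom (Icc x y) (Icc x' y')) : ∃ Z, PC Z = Icc x y ∧ PR Z = Icc x' y' := by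
  have hlt' : x' < y' := hxy'.lt_of_ne fun he => by
    subst he
    simpa using h.nontrivial ⟨x, left_mem_Icc.2 hxy.le, y, right_mem_Icc.2 hxy.le, hxy.ne⟩
  have hcard := h.ncard_inter_infinities (exists_coe_mem_Icc_ne hxy)
  rcases Icc_eq_coe_or_isHalfLine_or_univ hxy with ⟨a, b, rfl, rfl⟩ | hM | hM <;>
    rcases Icc_eq_coe_or_isHalfLine_or_univ hlt' with ⟨a', b', rfl, rfl⟩ | hN | hN
  · have hab : a ≤ b := mod_cast hxy.le
    have ha'b' : a' ≤ b' := mod_cast hlt'.le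
    exact exists_PC_PR_Icc_coe hab
      (le_antisymm (h.sub_le_sub_of_Icc_coe hab) (h.symm.sub_le_sub_of_Icc_coe ha'b'))
  · simp [ncard_Icc_coe_inter_infinities, hN.ncard_inter_infinities] at hcard
  · simp [ncard_Icc_coe_inter_infinities, hN, ncard_infinities] at hcard
  · simp [ncard_Icc_coe_inter_infinities, hM.ncard_inter_infinities] at hcard
  · exact exists_PC_PR_of_isHalfLine hM hN
  · simp [hM.ncard_inter_infinities, hN, ncard_infinities] at hcard
  · simp [ncard_Icc_coe_inter_infinities, hM, ncard_infinities] at hcard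
  · simp [hN.ncard_inter_infinities, hM, ncard_infinities] at hcard
  · rw [hM, hN]
    exact exists_PC_PR_univ

/-- any pair of isometric closed convex subsets of `ℝ̂` is realised as the
projective column space and projective row space of a single `2 × 2` tropical matrix. -/
theorem exists_matrix_with_given_col_row_spaces (M N : Set EReal)
    (hM : IsClosedConvex M) (hN : IsClosedConvex N) (hMN : Isom M N) :
    ∃ Z : Mat2, PC Z = M ∧ PR Z = N := by
  obtain rfl | ⟨x, y, hxy, rfl⟩ := hM
  · exact ⟨_, PC_bot, hMN.eq_empty rfl ▸ PR_bot⟩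
  obtain rfl | ⟨x', y', hxy', rfl⟩ := hN
  · exact absurd (hMN.symm.eq_empty rfl) (nonempty_Icc.2 hxy).ne_empty
  obtain rfl | hlt := hxy.eq_or_lt
  · rw [Icc_self] at hMN ⊢
    obtain ⟨q, hq⟩ := hMN.exists_eq_singleton
    rw [hq]
    exact exists_PC_PR_singleton x q
  · exact exists_PC_PR_of_isom_Icc hlt hxy' hMN
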